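/- Counting cyclic equilateral polygons: let n = 2k+1 be odd. For each 0 ≤ p ≤ k, the number N^p_n of combinatorial types of cyclic equilateral n-gons (determined by choosing a set of i negatively oriented edges among n, i ≤ p, and a winding/orientation datum) with 2e - 2ω - 2 = 2p equals Σ_{0 ≤ i ≤ p} C(n, i). In particular Σ_{p=0}^{k} N^p_n with multiplicity-two counting of orientations equals twice the total number of critical points, and N^p_n = Σ_{0 ≤ i ≤ p} C(n, i) matches the Betti number β^{2p} of the decorated moduli space. -/

import Mathlib

/-- The Morse index of a combinatorial type of cyclic equilateral `(2k+1)`-gon,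
given by the set `E` of negatively oriented edges and the winding number `ω`
(for `ω < 0` the mirror convention is used): `μ = 2e - 2ω - 2` with `e = n - |E|`
positive edges for `ω > 0`, and the Poincaré-dual value for `ω < 0`. -/
def morseIndexOfType (n : ℕ) (E : Finset (Fin n)) (ω : ℤ) : ℤ :=
  if 0 < ω then 2 * ((n : ℤ) - E.card) - 2 * ω - 2 else 2 * (E.card : ℤ) - 2 * ω - 2

/-! The types of index `2p < 2k` are exactly the pairs `(E, |E| - 1 - p)` with `|E| ≤ p`: a
positive winding number would force `ω = 2k - |E| - p > k - |E|`, violating admissibility.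
Counting the sets `E` by their size gives `∑_{i ≤ p} C(2k+1, i)`. -/

open Finset

theorem Finset.card_filter_card_le_univ {α : Type*} [Fintype α] (p : ℕ) :
    #{s : Finset α | s.card ≤ p} = ∑ i ∈ range (p + 1), (Fintype.card α).choose i := by
  classical
  rw [card_eq_sum_card_fiberwise (f := card) (t := range (p + 1))
    fun s hs => mem_range.2 (Nat.lt_succ_of_le (mem_filter.1 hs).2)]
  refine sum_congr rfl fun i hi => ?_
  have hip : i ≤ p := Nat.lt_succ_iff.1 (mem_range.1 hi)
  rw [filter_filter, ← card_univ, ← card_powersetCard, powersetCard_eq_filter, powerset_univ]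
  congr 1
  exact filter_congr fun s _ => ⟨And.right, fun h => ⟨h ▸ hip, h⟩⟩

theorem morseIndexOfType_eq_two_mul_iff {k p : ℕ} (hp : p < k) {E : Finset (Fin (2 * k + 1))}
    {ω : ℤ} (hω : 1 ≤ |ω|) (hωE : |ω| ≤ k - #E) :
    morseIndexOfType (2 * k + 1) E ω = 2 * p ↔ #E ≤ p ∧ ω = #E - 1 - p := by
  unfold morseIndexOfType
  rcases le_or_gt ω 0 with hneg | hpos
  · rw [abs_of_nonpos hneg] at hω hωE
    rw [if_neg hneg.not_gt]
    omega
  · rw [abs_of_pos hpos] at hωE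
    rw [if_pos hpos]
    push_cast
    omega

open Classical in
theorem count_cyclic_equilateral_polygons_general (k p : ℕ) (hp : p < k) :
    ((Finset.univ ×ˢ Finset.Icc (-(k : ℤ)) (k : ℤ)).filter
        (fun Eω : Finset (Fin (2 * k + 1)) × ℤ =>
          1 ≤ |Eω.2| ∧ |Eω.2| ≤ (k : ℤ) - Eω.1.card ∧
            morseIndexOfType (2 * k + 1) Eω.1 Eω.2 = 2 * p)).card
      = ∑ i ∈ Finset.range (p + 1), Nat.choose (2 * k + 1) i := by
  have htypes : ((Finset.univ ×ˢ Finset.Icc (-(k : ℤ)) (k : ℤ)).filter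
        (fun Eω : Finset (Fin (2 * k + 1)) × ℤ =>
          1 ≤ |Eω.2| ∧ |Eω.2| ≤ (k : ℤ) - Eω.1.card ∧
            morseIndexOfType (2 * k + 1) Eω.1 Eω.2 = 2 * p))
      = (univ.filter fun E : Finset (Fin (2 * k + 1)) => #E ≤ p).image
          fun E => (E, (#E : ℤ) - 1 - p) := by
    ext ⟨E, ω⟩
    simp only [mem_filter, mem_image, mem_product, mem_univ, mem_Icc, true_and, Prod.mk.injEq]
    constructor
    · rintro ⟨-, hω, hωE, hμ⟩
      obtain ⟨hE, rfl⟩ := (morseIndexOfType_eq_two_mul_iff hp hω hωE).1 hμ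
      exact ⟨E, hE, rfl, rfl⟩
    · rintro ⟨E, hE, rfl, rfl⟩
      have habs : |(#E : ℤ) - 1 - p| = p + 1 - #E := by rw [abs_of_neg (by omega)]; ring
      have hω : 1 ≤ |(#E : ℤ) - 1 - p| := by omega
      have hωE : |(#E : ℤ) - 1 - p| ≤ k - #E := by omega
      exact ⟨by omega, hω, hωE, (morseIndexOfType_eq_two_mul_iff hp hω hωE).2 ⟨hE, rfl⟩⟩
  rw [htypes, card_image_of_injective _ fun _ _ h => congrArg Prod.fst h,
    card_filter_card_le_univ, Fintype.card_fin]

open Classical in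
/-- Counting cyclic equilateral polygons: for odd `n = 2k+1` and `p < k`, the number
of combinatorial types (a set `E` of negatively oriented edges together with an
admissible winding number `ω`, `1 ≤ |ω| ≤ k - |E|`) whose Morse index `2e - 2ω - 2`
equals `2p` is `N^p_n = Σ_{0 ≤ i ≤ p} C(n, i)`. -/
theorem count_cyclic_equilateral_polygons (k p : ℕ) (hk : 1 ≤ k) (hp : p < k) :
    ((Finset.univ ×ˢ Finset.Icc (-(k : ℤ)) (k : ℤ)).filter
        (fun Eω : Finset (Fin (2 * k + 1)) × ℤ =>
          1 ≤ |Eω.2| ∧ |Eω.2| ≤ (k : ℤ) - Eω.1.card ∧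
            morseIndexOfType (2 * k + 1) Eω.1 Eω.2 = 2 * p)).card
      = ∑ i ∈ Finset.range (p + 1), Nat.choose (2 * k + 1) i :=
  count_cyclic_equilateral_polygons_general k p hp
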